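/- Fix β > 0, J > 0, J₀ ∈ ℝ, h ∈ ℝ. For N ≥ 3 let Z_N := Σ_{σ ∈ {-1,1}^N} exp(βJ₀·Σ_{i=1}^N σ_i σ_{i+1} + (βJ/N)·Σ_{1≤i<j≤N} σ_i σ_j + βh·Σ_{i=1}^N σ_i), where indices are taken mod N (periodic one-dimensional chain, σ_{N+1} = σ_1). Then lim_{N→∞} (1/N)·log Z_N = sup_{u ∈ ℝ} [ −βJu²/2 + βJ₀ + log( cosh(βJu + βh) + √( sinh(βJu + βh)² + e^{−4βJ₀} ) ) ]. -/

import Mathlib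

/-!
Write `M = ∑ σᵢ`. Since `∑_{i<j} σᵢσⱼ = (M² - N)/2`, the mean-field term is `-βJ/2 + βJ M²/(2N)`,
and `βJ M²/(2N) = max_u (βJ u M - N βJ u²/2)`, attained at `u = M/N`. Fixing `u` bounds `Z_N` from
below by `e^{-βJ/2 - NβJu²/2}` times the partition function of the Ising ring in the field
`βJu + βh`; restricting the maximum to the `N + 1` values of `M/N` bounds it from above by `N + 1`
such terms. The transfer matrix of the ring has eigenvalues `λ₊ > |λ₋|`, so the ring's partition
function is `λ₊^N + λ₋^N`, and `(1/N) log Z_N` is squeezed between `-βJu²/2 + log λ₊(u) + o(1)`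
for every `u` and `sup_u (-βJu²/2 + log λ₊(u)) + O(log N / N)`.
-/

open Real Filter Finset

noncomputable def spin (b : Bool) : ℝ := if b then 1 else -1

open Topology

theorem add_pow_le_two_mul_pow {P Q : ℝ} (hQ : |Q| ≤ P) (N : ℕ) : P ^ N + Q ^ N ≤ 2 * P ^ N := by
  have := (le_abs_self (Q ^ N)).trans (abs_pow Q N ▸ pow_le_pow_left₀ (abs_nonneg Q) hQ N)
  linarith

theorem add_pow_pos_of_abs_lt {P Q : ℝ} (hQ : |Q| < P) (N : ℕ) : 0 < P ^ N + Q ^ N := by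
  rcases N.eq_zero_or_pos with rfl | hN
  · norm_num
  · have hlt := pow_lt_pow_left₀ hQ (abs_nonneg Q) hN.ne'
    have hneg := neg_abs_le (Q ^ N)
    rw [abs_pow] at hneg
    linarith

theorem tendsto_log_add_pow_div_atTop {P Q : ℝ} (hQ : |Q| < P) :
    Tendsto (fun N : ℕ => log (P ^ N + Q ^ N) / N) atTop (𝓝 (log P)) := by
  have hP : 0 < P := (abs_nonneg Q).trans_lt hQ
  have hq : |Q / P| < 1 := by rwa [abs_div, abs_of_pos hP, div_lt_one hP]
  have hlog : Tendsto (fun N : ℕ => log (1 + (Q / P) ^ N)) atTop (𝓝 0) := by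
    simpa using ((tendsto_pow_atTop_nhds_zero_of_abs_lt_one hq).const_add 1).log (by norm_num)
  have hsplit : ∀ N : ℕ, N ≠ 0 →
      log P + log (1 + (Q / P) ^ N) / N = log (P ^ N + Q ^ N) / N := by
    intro N hN
    have hpos : 0 < 1 + (Q / P) ^ N := by simpa using add_pow_pos_of_abs_lt hq N
    rw [show P ^ N + Q ^ N = P ^ N * (1 + (Q / P) ^ N) by
        rw [mul_add, mul_one, div_pow, mul_div_cancel₀ _ (pow_ne_zero _ hP.ne')],
      log_mul (by positivity) hpos.ne', log_pow]
    field_simp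
  refine Tendsto.congr' ?_ (by simpa using
    (hlog.div_atTop tendsto_natCast_atTop_atTop).const_add (log P))
  filter_upwards [eventually_ne_atTop 0] with N hN using hsplit N hN

theorem tendsto_log_two_mul_add_one_div_atTop :
    Tendsto (fun N : ℕ => log (2 * (N + 1)) / N) atTop (𝓝 0) := by
  have hx : Tendsto (fun N : ℕ => 2 * ((N : ℝ) + 1)) atTop atTop :=
    (tendsto_natCast_atTop_atTop.atTop_add (tendsto_const_nhds (x := 1))).const_mul_atTop two_pos
  refine ((tendsto_pow_log_div_mul_add_atTop (1 / 2) (-1) 1 (by norm_num)).comp hx).congr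
    fun N => ?_
  simp only [Function.comp_apply, pow_one]
  ring_nf

theorem tendsto_ciSup_of_lower_upper {α ι : Type*} [Nonempty ι] {l : Filter α}
    {f e : α → ℝ} {g : ι → ℝ}
    (hlow : ∀ i, ∃ a : α → ℝ, Tendsto a l (𝓝 (g i)) ∧ ∀ᶠ x in l, a x ≤ f x)
    (he : Tendsto e l (𝓝 0)) (hup : ∀ᶠ x in l, f x ≤ (⨆ i, g i) + e x) :
    Tendsto f l (𝓝 (⨆ i, g i)) := by
  rw [tendsto_order]
  constructor
  · intro b hb
    obtain ⟨i, hi⟩ := exists_lt_of_lt_ciSup hb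
    obtain ⟨a, ha, hle⟩ := hlow i
    filter_upwards [ha.eventually (lt_mem_nhds hi), hle] with x h1 h2 using h1.trans_le h2
  · intro b hb
    have : Tendsto (fun x => (⨆ i, g i) + e x) l (𝓝 (⨆ i, g i)) := by
      simpa using he.const_add (⨆ i, g i)
    filter_upwards [this.eventually (gt_mem_nhds hb), hup] with x h1 h2 using h2.trans_lt h1

namespace Matrix

variable {ι R : Type*} [Fintype ι] [DecidableEq ι] [CommRing R]

theorem trace_pow_mul_eq_sum_prod (T : Matrix ι ι R) (n : ℕ) (U : Matrix ι ι R) :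
    trace (T ^ n * U) = ∑ σ : Fin (n + 1) → ι,
      (∏ i : Fin n, T (σ i.castSucc) (σ i.succ)) * U (σ (Fin.last n)) (σ 0) := by
  induction n generalizing U with
  | zero =>
    simp [trace, ← (Equiv.funUnique (Fin 1) ι).symm.sum_comp]
  | succ n ih =>
    rw [pow_succ, Matrix.mul_assoc, ih]
    conv_rhs => rw [← (Fin.snocEquiv fun _ => ι).sum_comp]
    simp only [mul_apply, mul_sum, Fin.snocEquiv_apply, Fin.snoc_castSucc, Fin.prod_univ_castSucc,
      ← Fin.castSucc_succ, Fin.succ_last, Fin.snoc_last, Fin.snoc_apply_zero, Fintype.sum_prod_type]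
    rw [Finset.sum_comm]
    simp only [mul_assoc]

theorem trace_pow_eq_sum_prod_finRotate (T : Matrix ι ι R) {N : ℕ} (hN : N ≠ 0) :
    trace (T ^ N) = ∑ σ : Fin N → ι, ∏ i, T (σ i) (σ (finRotate N i)) := by
  obtain ⟨n, rfl⟩ := Nat.exists_eq_succ_of_ne_zero hN
  rw [pow_succ, trace_pow_mul_eq_sum_prod]
  refine sum_congr rfl fun σ _ => ?_
  rw [Fin.prod_univ_castSucc, finRotate_last]
  simp [Fin.coeSucc_eq_succ]

theorem trace_pow_eq_add_pow_of_bool (A : Matrix Bool Bool R) {a b : R}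
    (hsum : trace A = a + b)
    (hprod : A true true * A false false - A true false * A false true = a * b) (n : ℕ) :
    trace (A ^ n) = a ^ n + b ^ n := by
  have cayley_hamilton : A ^ 2 = (a + b) • A - (a * b) • 1 := by
    rw [← hsum, ← hprod]
    ext i j
    cases i <;> cases j <;> simp [sq, mul_apply, trace] <;> ring
  induction n using Nat.twoStepInduction with
  | zero => simp only [pow_zero, trace_one, Fintype.card_bool]; norm_num
  | one => simpa using hsum
  | more n ih₀ ih₁ =>
    rw [pow_add, cayley_hamilton, Matrix.mul_sub, Matrix.mul_smul, Matrix.mul_smul, ← pow_succ,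
      Matrix.mul_one, trace_sub, trace_smul, trace_smul, ih₀, ih₁, smul_eq_mul, smul_eq_mul]
    ring

end Matrix

namespace IsingChain

noncomputable def transferMatrix (K y : ℝ) : Matrix Bool Bool ℝ :=
  Matrix.of fun a b => exp (K * spin a * spin b + y * spin a)

noncomputable def lambdaPlus (K y : ℝ) : ℝ :=
  exp K * (cosh y + √(sinh y ^ 2 + exp (-(4 * K))))

noncomputable def lambdaMinus (K y : ℝ) : ℝ :=
  exp K * (cosh y - √(sinh y ^ 2 + exp (-(4 * K))))

noncomputable def partitionFunction (N : ℕ) (K y : ℝ) : ℝ :=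
  ∑ σ : Fin N → Bool,
    exp (K * ∑ i, spin (σ i) * spin (σ (finRotate N i)) + y * ∑ i, spin (σ i))

variable (K y : ℝ)

theorem trace_transferMatrix : (transferMatrix K y).trace = lambdaPlus K y + lambdaMinus K y := by
  have hsum : lambdaPlus K y + lambdaMinus K y = exp (K + y) + exp (K + -y) := by
    rw [lambdaPlus, lambdaMinus, cosh_eq, exp_add, exp_add]; ring
  simp [hsum, Matrix.trace, transferMatrix, spin]

theorem transferMatrix_det :
    transferMatrix K y true true * transferMatrix K y false false
      - transferMatrix K y true false * transferMatrix K y false true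
      = lambdaPlus K y * lambdaMinus K y := by
  have hsqrt : √(sinh y ^ 2 + exp (-(4 * K))) ^ 2 = sinh y ^ 2 + exp (-(4 * K)) :=
    sq_sqrt (by positivity)
  have hprod : lambdaPlus K y * lambdaMinus K y
      = exp K ^ 2 * (cosh y ^ 2 - √(sinh y ^ 2 + exp (-(4 * K))) ^ 2) := by
    unfold lambdaPlus lambdaMinus; ring
  have h4 : exp (-(4 * K)) = (exp K ^ 4)⁻¹ := by
    rw [exp_neg, ← exp_nat_mul]; norm_num
  rw [hprod, hsqrt, h4]
  simp only [transferMatrix, spin, Matrix.of_apply, if_true, Bool.false_eq_true, if_false, exp_add,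
    mul_one, mul_neg, neg_neg, exp_neg]
  field_simp
  linear_combination (-exp K ^ 4) * cosh_sq_sub_sinh_sq y

theorem partitionFunction_eq {N : ℕ} (hN : N ≠ 0) :
    partitionFunction N K y = lambdaPlus K y ^ N + lambdaMinus K y ^ N := by
  rw [← Matrix.trace_pow_eq_add_pow_of_bool _ (trace_transferMatrix K y) (transferMatrix_det K y),
    Matrix.trace_pow_eq_sum_prod_finRotate _ hN]
  refine sum_congr rfl fun σ _ => ?_
  rw [mul_sum, mul_sum, ← sum_add_distrib, exp_sum]
  simp [transferMatrix, mul_assoc]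

theorem abs_lambdaMinus_lt_lambdaPlus : |lambdaMinus K y| < lambdaPlus K y := by
  have hsqrt : 0 < √(sinh y ^ 2 + exp (-(4 * K))) := sqrt_pos.2 (by positivity)
  have hdiff : 0 < lambdaPlus K y - lambdaMinus K y := by
    rw [lambdaPlus, lambdaMinus, ← mul_sub]; nlinarith [exp_pos K]
  have hsum : 0 < lambdaPlus K y + lambdaMinus K y := by
    rw [lambdaPlus, lambdaMinus, ← mul_add]; nlinarith [exp_pos K, cosh_pos y]
  exact abs_lt.2 ⟨by linarith, by linarith⟩

theorem lambdaPlus_pos : 0 < lambdaPlus K y :=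
  (abs_nonneg _).trans_lt (abs_lambdaMinus_lt_lambdaPlus K y)

theorem log_lambdaPlus :
    log (lambdaPlus K y) = K + log (cosh y + √(sinh y ^ 2 + exp (-(4 * K)))) := by
  rw [lambdaPlus, log_mul (exp_ne_zero K) (by positivity), log_exp]

theorem log_lambdaPlus_le :
    log (lambdaPlus K y) ≤ K + log (1 + exp (-(2 * K))) + |y| := by
  have hsqrt : √(sinh y ^ 2 + exp (-(4 * K))) ≤ |sinh y| + exp (-(2 * K)) := by
    refine sqrt_le_iff.2 ⟨by positivity, ?_⟩
    have hsq : exp (-(2 * K)) ^ 2 = exp (-(4 * K)) := by rw [← exp_nat_mul]; ring_nf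
    nlinarith [mul_nonneg (abs_nonneg (sinh y)) (exp_pos (-(2 * K))).le, sq_abs (sinh y)]
  have hbound : cosh y + √(sinh y ^ 2 + exp (-(4 * K))) ≤ (1 + exp (-(2 * K))) * exp |y| := by
    rw [abs_sinh] at hsqrt
    rw [← cosh_abs]
    nlinarith [cosh_add_sinh |y|, one_le_exp (abs_nonneg y), exp_pos (-(2 * K))]
  rw [log_lambdaPlus, add_assoc, add_le_add_iff_left, ← log_exp |y|,
    ← log_mul (by positivity) (exp_ne_zero _)]
  exact log_le_log (by positivity) hbound

end IsingChain

theorem two_mul_sum_filter_lt_mul {ι R : Type*} [Fintype ι] [LinearOrder ι] [CommRing R]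
    (x : ι → R) :
    2 * ∑ p ∈ univ.filter (fun p : ι × ι => p.1 < p.2), x p.1 * x p.2
      = (∑ i, x i) ^ 2 - ∑ i, x i ^ 2 := by
  have htri : ∀ i j, x i * x j = (if i < j then x i * x j else 0) + (if j < i then x j * x i else 0)
      + (if i = j then x i ^ 2 else 0) := by
    intro i j
    rcases lt_trichotomy i j with hij | rfl | hij
    · simp [hij, hij.not_gt, hij.ne]
    · simp [sq]
    · simp [hij, hij.not_gt, hij.ne', mul_comm]
  rw [sq, sum_mul_sum, sum_congr rfl fun i _ => sum_congr rfl fun j _ => htri i j]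
  simp only [sum_add_distrib, sum_ite_eq, mem_univ, if_true, sum_filter, Fintype.sum_prod_type]
  rw [sum_comm (f := fun i j => if j < i then x j * x i else 0)]
  ring

theorem spin_mul_self (b : Bool) : spin b * spin b = 1 := by cases b <;> simp [spin]

theorem sum_spin_eq (N : ℕ) (σ : Fin N → Bool) :
    ∑ i, spin (σ i) = 2 * (univ.filter fun i => σ i = true).card - N := by
  have h : ∀ i, spin (σ i) = 2 * (if σ i = true then 1 else 0) - 1 := by
    intro i; cases σ i <;> norm_num [spin]
  rw [sum_congr rfl fun i _ => h i, sum_sub_distrib, ← mul_sum, sum_boole]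
  simp

section MeanFieldDecoupling

variable {Ω : Type*} [Fintype Ω] (E m : Ω → ℝ) {a n : ℝ}

theorem exp_neg_mul_sq_mul_sum_exp_le (ha : 0 ≤ a) (hn : 0 < n) (u : ℝ) :
    exp (-(n * a * u ^ 2 / 2)) * ∑ ω, exp (E ω + a * u * m ω)
      ≤ ∑ ω, exp (E ω + a * m ω ^ 2 / (2 * n)) := by
  rw [mul_sum]
  refine sum_le_sum fun ω _ => ?_
  rw [← exp_add, exp_le_exp]
  have hsq : a * m ω ^ 2 / (2 * n) - (-(n * a * u ^ 2 / 2) + (E ω + a * u * m ω)) + E ω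
      = a * (m ω - n * u) ^ 2 / (2 * n) := by
    field_simp; ring
  have : 0 ≤ a * (m ω - n * u) ^ 2 / (2 * n) := by positivity
  linarith

theorem sum_exp_le_sum_exp_neg_mul_sq_mul (hn : n ≠ 0) {U : Finset ℝ} (hU : ∀ ω, m ω / n ∈ U) :
    ∑ ω, exp (E ω + a * m ω ^ 2 / (2 * n))
      ≤ ∑ u ∈ U, exp (-(n * a * u ^ 2 / 2)) * ∑ ω, exp (E ω + a * u * m ω) := by
  simp_rw [mul_sum]
  rw [sum_comm]
  refine sum_le_sum fun ω _ => ?_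
  have hopt : exp (E ω + a * m ω ^ 2 / (2 * n))
      = exp (-(n * a * (m ω / n) ^ 2 / 2)) * exp (E ω + a * (m ω / n) * m ω) := by
    rw [← exp_add]; congr 1; field_simp; ring
  rw [hopt]
  exact single_le_sum (f := fun u => exp (-(n * a * u ^ 2 / 2)) * exp (E ω + a * u * m ω))
    (fun u _ => by positivity) (hU ω)

end MeanFieldDecoupling

noncomputable def meanFieldPartitionFunction (β J J₀ h : ℝ) (N : ℕ) : ℝ :=
  ∑ σ : Fin N → Bool, Real.exp
    (β * J₀ * ∑ i, spin (σ i) * spin (σ (finRotate N i))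
      + (β * J / (N : ℝ)) *
          ∑ p ∈ Finset.univ.filter (fun p : Fin N × Fin N => p.1 < p.2),
            spin (σ p.1) * spin (σ p.2)
      + β * h * ∑ i, spin (σ i))

noncomputable def variationalFunction (β J J₀ h u : ℝ) : ℝ :=
  -(β * J * u ^ 2) / 2 + log (IsingChain.lambdaPlus (β * J₀) (β * J * u + β * h))

section MeanFieldRing

variable (β J J₀ h : ℝ) {N : ℕ}

theorem sum_filter_lt_spin_mul_spin (σ : Fin N → Bool) :
    ∑ p ∈ univ.filter (fun p : Fin N × Fin N => p.1 < p.2), spin (σ p.1) * spin (σ p.2)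
      = ((∑ i, spin (σ i)) ^ 2 - N) / 2 := by
  have hsq := two_mul_sum_filter_lt_mul fun i => spin (σ i)
  simp only [sq (spin _), spin_mul_self, sum_const, card_univ, Fintype.card_fin, nsmul_eq_mul,
    mul_one] at hsq
  linarith

/-- The constant `-βJ/2` is the diagonal `i = j` of `(∑ σᵢ)²`, which the pair sum lacks. -/
noncomputable def ringLogWeight (σ : Fin N → Bool) : ℝ :=
  β * J₀ * ∑ i, spin (σ i) * spin (σ (finRotate N i)) + β * h * ∑ i, spin (σ i) - β * J / 2

theorem meanFieldPartitionFunction_eq (hN : N ≠ 0) :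
    meanFieldPartitionFunction β J J₀ h N
      = ∑ σ : Fin N → Bool,
          exp (ringLogWeight β J J₀ h σ + β * J * (∑ i, spin (σ i)) ^ 2 / (2 * N)) := by
  refine sum_congr rfl fun σ _ => ?_
  rw [sum_filter_lt_spin_mul_spin, ringLogWeight]
  congr 1
  field_simp
  ring

theorem sum_exp_ringLogWeight (u : ℝ) :
    ∑ σ : Fin N → Bool, exp (ringLogWeight β J J₀ h σ + β * J * u * ∑ i, spin (σ i))
      = exp (-(β * J / 2)) * IsingChain.partitionFunction N (β * J₀) (β * J * u + β * h) := by
  rw [IsingChain.partitionFunction, mul_sum]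
  refine sum_congr rfl fun σ _ => ?_
  rw [ringLogWeight, ← exp_add]
  ring_nf

end MeanFieldRing

section MeanFieldBounds

variable {β J : ℝ} (J₀ h : ℝ) {N : ℕ}

theorem variationalFunction_le (hβJ : 0 ≤ β * J) (u : ℝ) :
    variationalFunction β J J₀ h u
      ≤ β * J₀ + log (1 + exp (-(2 * (β * J₀)))) + |β * h| + β * J / 2 := by
  have hlog := IsingChain.log_lambdaPlus_le (β * J₀) (β * J * u + β * h)
  have habs : |β * J * u + β * h| ≤ β * J * |u| + |β * h| := by
    simpa [abs_mul, abs_of_nonneg hβJ] using abs_add_le (β * J * u) (β * h)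
  have hquad : β * J * |u| - β * J * u ^ 2 / 2 ≤ β * J / 2 := by
    nlinarith [mul_nonneg hβJ (sq_nonneg (|u| - 1)), sq_abs u]
  rw [variationalFunction]
  linarith

theorem exp_mul_add_pow_le_meanFieldPartitionFunction (hβJ : 0 ≤ β * J) (hN : N ≠ 0) (u : ℝ) :
    exp (-(β * J / 2) - N * (β * J) * u ^ 2 / 2) *
        (IsingChain.lambdaPlus (β * J₀) (β * J * u + β * h) ^ N
          + IsingChain.lambdaMinus (β * J₀) (β * J * u + β * h) ^ N)
      ≤ meanFieldPartitionFunction β J J₀ h N := calc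
  _ = exp (-(N * (β * J) * u ^ 2 / 2)) *
        ∑ σ : Fin N → Bool, exp (ringLogWeight β J J₀ h σ + β * J * u * ∑ i, spin (σ i)) := by
    rw [sum_exp_ringLogWeight, IsingChain.partitionFunction_eq _ _ hN, ← mul_assoc (exp _),
      ← exp_add]
    ring_nf
  _ ≤ ∑ σ : Fin N → Bool,
        exp (ringLogWeight β J J₀ h σ + β * J * (∑ i, spin (σ i)) ^ 2 / (2 * N)) :=
    exp_neg_mul_sq_mul_sum_exp_le _ _ hβJ (Nat.cast_pos.2 (Nat.pos_of_ne_zero hN)) u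
  _ = meanFieldPartitionFunction β J J₀ h N := (meanFieldPartitionFunction_eq β J J₀ h hN).symm

theorem sum_spin_div_mem_image (σ : Fin N → Bool) :
    (∑ i, spin (σ i)) / N ∈ (range (N + 1)).image fun k : ℕ => (2 * k - N : ℝ) / N := by
  refine mem_image.2 ⟨#{i | σ i = true}, mem_range.2 ?_, by rw [sum_spin_eq]⟩
  have := card_le_univ (univ.filter fun i => σ i = true)
  rw [Fintype.card_fin] at this
  omega

theorem exp_neg_mul_sq_mul_sum_exp_ringLogWeight_le (hβJ : 0 ≤ β * J) (hN : N ≠ 0) (u : ℝ) :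
    exp (-(N * (β * J) * u ^ 2 / 2)) *
        ∑ σ : Fin N → Bool, exp (ringLogWeight β J J₀ h σ + β * J * u * ∑ i, spin (σ i))
      ≤ 2 * exp (N * variationalFunction β J J₀ h u) := by
  set P := IsingChain.lambdaPlus (β * J₀) (β * J * u + β * h)
  set Q := IsingChain.lambdaMinus (β * J₀) (β * J * u + β * h)
  have hQ : |Q| < P := IsingChain.abs_lambdaMinus_lt_lambdaPlus _ _
  have hdiag : exp (-(β * J / 2)) ≤ 1 := exp_le_one_iff.2 (by linarith)
  rw [sum_exp_ringLogWeight, IsingChain.partitionFunction_eq _ _ hN]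
  calc exp (-(N * (β * J) * u ^ 2 / 2)) * (exp (-(β * J / 2)) * (P ^ N + Q ^ N))
      ≤ exp (-(N * (β * J) * u ^ 2 / 2)) * (1 * (2 * P ^ N)) := by
        have := add_pow_le_two_mul_pow hQ.le N
        have := (add_pow_pos_of_abs_lt hQ N).le
        gcongr
    _ = 2 * exp (N * variationalFunction β J J₀ h u) := by
        rw [variationalFunction, mul_add, exp_add, exp_nat_mul (log P),
          exp_log ((abs_nonneg Q).trans_lt hQ)]
        ring_nf

theorem meanFieldPartitionFunction_le (hβJ : 0 ≤ β * J) (hN : N ≠ 0) {S : ℝ}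
    (hS : ∀ u, variationalFunction β J J₀ h u ≤ S) :
    meanFieldPartitionFunction β J J₀ h N ≤ 2 * (N + 1) * exp (N * S) := by
  set U := (range (N + 1)).image fun k : ℕ => (2 * k - N : ℝ) / N
  have hcard : (U.card : ℝ) ≤ N + 1 := by exact_mod_cast card_image_le.trans_eq (card_range _)
  calc meanFieldPartitionFunction β J J₀ h N
      ≤ ∑ u ∈ U, exp (-(N * (β * J) * u ^ 2 / 2)) *
          ∑ σ : Fin N → Bool, exp (ringLogWeight β J J₀ h σ + β * J * u * ∑ i, spin (σ i)) := by
        rw [meanFieldPartitionFunction_eq _ _ _ _ hN]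
        exact sum_exp_le_sum_exp_neg_mul_sq_mul _ _ (Nat.cast_ne_zero.2 hN)
          sum_spin_div_mem_image
    _ ≤ ∑ _u ∈ U, 2 * exp (N * S) := sum_le_sum fun u _ =>
        (exp_neg_mul_sq_mul_sum_exp_ringLogWeight_le J₀ h hβJ hN u).trans
          (by gcongr; exact hS u)
    _ ≤ 2 * (N + 1) * exp (N * S) := by
        rw [sum_const, nsmul_eq_mul]
        nlinarith [exp_pos (N * S)]

theorem le_log_meanFieldPartitionFunction_div (hβJ : 0 ≤ β * J) (hN : N ≠ 0) (u : ℝ) :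
    -(β * J / 2) / N - β * J * u ^ 2 / 2
        + log (IsingChain.lambdaPlus (β * J₀) (β * J * u + β * h) ^ N
          + IsingChain.lambdaMinus (β * J₀) (β * J * u + β * h) ^ N) / N
      ≤ log (meanFieldPartitionFunction β J J₀ h N) / N := by
  have hpos := add_pow_pos_of_abs_lt (IsingChain.abs_lambdaMinus_lt_lambdaPlus
    (β * J₀) (β * J * u + β * h)) N
  have hlog := log_le_log (by positivity)
    (exp_mul_add_pow_le_meanFieldPartitionFunction J₀ h hβJ hN u)
  rw [log_mul (exp_ne_zero _) hpos.ne', log_exp] at hlog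
  have hN' : (0 : ℝ) < N := Nat.cast_pos.2 (Nat.pos_of_ne_zero hN)
  calc _ = (-(β * J / 2) - N * (β * J) * u ^ 2 / 2
          + log (IsingChain.lambdaPlus (β * J₀) (β * J * u + β * h) ^ N
            + IsingChain.lambdaMinus (β * J₀) (β * J * u + β * h) ^ N)) / N := by
        field_simp
    _ ≤ _ := div_le_div_of_nonneg_right hlog hN'.le

theorem log_meanFieldPartitionFunction_div_le (hβJ : 0 ≤ β * J) (hN : N ≠ 0) {S : ℝ}
    (hS : ∀ u, variationalFunction β J J₀ h u ≤ S) :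
    log (meanFieldPartitionFunction β J J₀ h N) / N ≤ S + log (2 * (N + 1)) / N := by
  have hZ : 0 < meanFieldPartitionFunction β J J₀ h N :=
    sum_pos (fun σ _ => exp_pos _) univ_nonempty
  have hlog := log_le_log hZ (meanFieldPartitionFunction_le J₀ h hβJ hN hS)
  rw [log_mul (by positivity) (exp_ne_zero _), log_exp] at hlog
  have hN' : (0 : ℝ) < N := Nat.cast_pos.2 (Nat.pos_of_ne_zero hN)
  calc _ ≤ (log (2 * (N + 1)) + N * S) / N := div_le_div_of_nonneg_right hlog hN'.le
    _ = S + log (2 * (N + 1)) / N := by field_simp; ring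

end MeanFieldBounds

theorem oneD_ising_plus_fully_connected_free_energy
    (β J J₀ h : ℝ) (hβ : 0 < β) (hJ : 0 < J) :
    Tendsto
      (fun N : ℕ => (1 / (N : ℝ)) * Real.log
        (∑ σ : Fin N → Bool, Real.exp
          (β * J₀ * ∑ i, spin (σ i) * spin (σ (finRotate N i))
            + (β * J / (N : ℝ)) *
                ∑ p ∈ Finset.univ.filter (fun p : Fin N × Fin N => p.1 < p.2),
                  spin (σ p.1) * spin (σ p.2)
            + β * h * ∑ i, spin (σ i))))
      atTop
      (nhds (⨆ u : ℝ,
        (-(β * J * u ^ 2) / 2 + β * J₀ +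
          Real.log (Real.cosh (β * J * u + β * h) +
            Real.sqrt ((Real.sinh (β * J * u + β * h)) ^ 2 + Real.exp (-(4 * β * J₀))))))) := by
  have hβJ : 0 ≤ β * J := (mul_pos hβ hJ).le
  have hvar : ∀ u, -(β * J * u ^ 2) / 2 + β * J₀ + log (cosh (β * J * u + β * h) +
      √(sinh (β * J * u + β * h) ^ 2 + exp (-(4 * β * J₀)))) = variationalFunction β J J₀ h u := by
    intro u
    rw [variationalFunction, IsingChain.log_lambdaPlus, mul_assoc 4]
    ring
  have hbdd : BddAbove (Set.range (variationalFunction β J J₀ h)) :=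
    ⟨_, Set.forall_mem_range.2 (variationalFunction_le J₀ h hβJ)⟩
  simp only [hvar, one_div_mul_eq_div]
  refine tendsto_ciSup_of_lower_upper (fun u => ⟨_, ?_, (eventually_ne_atTop 0).mono fun N hN =>
    le_log_meanFieldPartitionFunction_div J₀ h hβJ hN u⟩) tendsto_log_two_mul_add_one_div_atTop
    ((eventually_ne_atTop 0).mono fun N hN =>
      log_meanFieldPartitionFunction_div_le J₀ h hβJ hN (le_ciSup hbdd))
  convert ((tendsto_const_div_atTop_nhds_zero_nat (-(β * J / 2))).sub_const (β * J * u ^ 2 / 2)).add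
    (tendsto_log_add_pow_div_atTop (IsingChain.abs_lambdaMinus_lt_lambdaPlus _ _)) using 2
  rw [variationalFunction]
  ring
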